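/- With L(w|G_S,λ) = (Π_{k∉M} λ s_k) exp(−λ s'w) and the edge-addition update s⁺_k = s_k − 1{k>j}C_{ik} − C_{jk}, the likelihood ratio for adding an edge {i,j} (i recruited before j) equals (Π_{k∉M} s⁺_k/s_k) · exp(λ (t_i* − min{t_j, t_i*} + t_j* − t_j)), where t_i* is the minimum of the time vertex i used its last coupon and the end-of-study time t_n, and t_j is the recruitment time of j. The key identities are Σ_k C_{ik} 1{k>j} w_k = t_i* − min{t_i*, t_j} and Σ_k C_{jk} w_k = t_j* − t_j. -/
import Mathlib


/-- Likelihood ratio for adding an edge `{i,j}` (with `i` recruited before `j`):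
with `L(v) = (Π_{k∉M} λ v_k) exp(-λ Σ_k v_k w_k)` and the update
`s⁺_k = s_k − 1{k>j} C_{ik} − C_{jk}`, we have
`L(s⁺)/L(s) = (Π_{k∉M} s⁺_k/s_k) · exp(λ (t_i* − min{t_i*, t_j} + t_j* − t_j))`,
via the key identities `Σ_k C_{ik} 1{k>j} w_k = t_i* − min{t_i*, t_j}` and
`Σ_k C_{jk} w_k = t_j* − t_j`.  Here `t` is the strictly increasing vector of
recruitment times, `w_k = t_k − t_{k−1}` (with `w_1 = 0`), `tstar i` is the index of
the event at which `i`'s last coupon was used (or the end of the study), and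
`C_{ik} = 1` iff `i < k ≤ tstar i`. -/
theorem likelihood_ratio_edge_addition (n : ℕ) (lam : ℝ) (hlam : 0 < lam)
    (M : Finset (Fin n))
    (t : Fin n → ℝ) (ht : StrictMono t)
    (w : Fin n → ℝ) (hw0 : ∀ k : Fin n, k.1 = 0 → w k = 0)
    (hw : ∀ k : Fin n, ∀ hk : 0 < k.1,
      w k = t k - t ⟨k.1 - 1, lt_trans (Nat.sub_lt hk one_pos) k.2⟩)
    (tstar : Fin n → Fin n) (htstar : ∀ i, i ≤ tstar i)
    (C : Fin n → Fin n → ℝ)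
    (hC : ∀ i k : Fin n, C i k = if i < k ∧ k ≤ tstar i then 1 else 0)
    (i j : Fin n) (hij : i < j)
    (s s' : Fin n → ℝ) (hspos : ∀ k ∉ M, 0 < s k)
    (hs' : ∀ k, s' k = s k - (if j < k then C i k else 0) - C j k)
    (L : (Fin n → ℝ) → ℝ)
    (hL : ∀ v, L v = (∏ k ∈ Mᶜ, lam * v k) * Real.exp (-(lam * ∑ k, v k * w k))) :
    (∑ k, (if j < k then C i k else 0) * w k
        = t (tstar i) - min (t (tstar i)) (t j)) ∧
    (∑ k, C j k * w k = t (tstar j) - t j) ∧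
    L s' / L s = (∏ k ∈ Mᶜ, s' k / s k) *
      Real.exp (lam * (t (tstar i) - min (t (tstar i)) (t j) + t (tstar j) - t j)) := by
  -- telescoping helper
  have tele : ∀ (a : Fin n) (m : ℕ) (hm : m < n), a.1 ≤ m →
      (∑ k : Fin n, (if a < k ∧ k ≤ (⟨m, hm⟩ : Fin n) then w k else 0))
        = t ⟨m, hm⟩ - t a := by
    intro a m
    induction m with
    | zero =>
      intro hm ha
      have haeq : a = ⟨0, hm⟩ := Fin.ext (Nat.le_zero.mp ha)
      have : ∀ k : Fin n, (if a < k ∧ k ≤ (⟨0, hm⟩ : Fin n) then w k else 0) = 0 := by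
        intro k
        have : ¬(a < k ∧ k ≤ (⟨0, hm⟩ : Fin n)) := by
          rintro ⟨h1, h2⟩
          rw [haeq] at h1
          exact absurd (lt_of_lt_of_le h1 h2) (lt_irrefl _)
        simp [this]
      rw [Finset.sum_congr rfl (fun k _ => this k), Finset.sum_const, haeq]
      simp
    | succ m ih =>
      intro hm ha
      have hm' : m < n := Nat.lt_of_succ_lt hm
      by_cases hcase : a.1 ≤ m
      · have hpt : ∀ k : Fin n,
            (if a < k ∧ k ≤ (⟨m + 1, hm⟩ : Fin n) then w k else 0)
              = (if a < k ∧ k ≤ (⟨m, hm'⟩ : Fin n) then w k else 0)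
                + (if k = (⟨m + 1, hm⟩ : Fin n) then w k else 0) := by
          intro k
          by_cases hk : k = (⟨m + 1, hm⟩ : Fin n)
          · subst hk
            have h1 : a < (⟨m + 1, hm⟩ : Fin n) := by
              simp only [Fin.lt_def]; omega
            have h2 : ¬((⟨m + 1, hm⟩ : Fin n) ≤ (⟨m, hm'⟩ : Fin n)) := by
              simp only [Fin.le_def]; omega
            simp [h1, h2]
          · have hk1 : k.1 ≠ m + 1 := fun h => hk (Fin.ext h)
            have h3 : (k ≤ (⟨m + 1, hm⟩ : Fin n)) ↔ (k ≤ (⟨m, hm'⟩ : Fin n)) := by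
              simp only [Fin.le_def]; omega
            simp [h3, hk]
        rw [Finset.sum_congr rfl (fun k _ => hpt k), Finset.sum_add_distrib,
          ih hm' hcase]
        have hsingle : (∑ k : Fin n, (if k = (⟨m + 1, hm⟩ : Fin n) then w k else 0))
            = w ⟨m + 1, hm⟩ := by
          simp
        rw [hsingle, hw ⟨m + 1, hm⟩ (Nat.succ_pos m)]
        have : (⟨m + 1 - 1, _⟩ : Fin n) = (⟨m, hm'⟩ : Fin n) := Fin.ext rfl
        rw [this]
        ring
      · have haeq : a = ⟨m + 1, hm⟩ := Fin.ext (show a.1 = m + 1 by omega)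
        have : ∀ k : Fin n, (if a < k ∧ k ≤ (⟨m + 1, hm⟩ : Fin n) then w k else 0) = 0 := by
          intro k
          have : ¬(a < k ∧ k ≤ (⟨m + 1, hm⟩ : Fin n)) := by
            rintro ⟨h1, h2⟩
            rw [haeq] at h1
            exact absurd (lt_of_lt_of_le h1 h2) (lt_irrefl _)
          simp [this]
        rw [Finset.sum_congr rfl (fun k _ => this k), Finset.sum_const, haeq]
        simp
  have key : ∀ (a b : Fin n), a ≤ b →
      (∑ k : Fin n, (if a < k ∧ k ≤ b then (1:ℝ) else 0) * w k) = t b - t a := by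
    intro a b hab
    have h := tele a b.1 b.2 hab
    simp only [Fin.eta] at h
    rw [← h]
    apply Finset.sum_congr rfl
    intro k _
    by_cases hk : a < k ∧ k ≤ b <;> simp [hk]
  -- Part 1
  have h1 : ∑ k, (if j < k then C i k else 0) * w k
      = t (tstar i) - min (t (tstar i)) (t j) := by
    have heq : ∀ k : Fin n, (if j < k then C i k else 0) * w k
        = (if j < k ∧ k ≤ tstar i then (1:ℝ) else 0) * w k := by
      intro k
      rw [hC]
      by_cases hk : j < k
      · have hik : i < k := lt_trans hij hk
        simp [hk, hik]
      · simp [hk]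
    rw [Finset.sum_congr rfl (fun k _ => heq k)]
    by_cases hcase : j < tstar i
    · rw [key j (tstar i) (le_of_lt hcase), min_eq_right (le_of_lt (ht hcase))]
    · have hle : tstar i ≤ j := not_lt.mp hcase
      have hz : ∀ k : Fin n, (if j < k ∧ k ≤ tstar i then (1:ℝ) else 0) * w k = 0 := by
        intro k
        have : ¬(j < k ∧ k ≤ tstar i) := by
          rintro ⟨ha, hb⟩
          exact absurd (lt_of_lt_of_le ha hb) (not_lt.mpr hle)
        simp [this]
      rw [Finset.sum_congr rfl (fun k _ => hz k), Finset.sum_const,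
        min_eq_left (ht.monotone hle)]
      simp
  -- Part 2
  have h2 : ∑ k, C j k * w k = t (tstar j) - t j := by
    have heq : ∀ k : Fin n, C j k * w k
        = (if j < k ∧ k ≤ tstar j then (1:ℝ) else 0) * w k := by
      intro k; rw [hC]
    rw [Finset.sum_congr rfl (fun k _ => heq k)]
    exact key j (tstar j) (htstar j)
  refine ⟨h1, h2, ?_⟩
  -- Part 3
  have hsum : ∑ k, s' k * w k
      = (∑ k, s k * w k) - (∑ k, (if j < k then C i k else 0) * w k)
        - (∑ k, C j k * w k) := by
    rw [← Finset.sum_sub_distrib, ← Finset.sum_sub_distrib]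
    apply Finset.sum_congr rfl
    intro k _
    rw [hs']
    ring
  have hprod : (∏ k ∈ Mᶜ, lam * s' k) / (∏ k ∈ Mᶜ, lam * s k)
      = ∏ k ∈ Mᶜ, s' k / s k := by
    rw [← Finset.prod_div_distrib]
    apply Finset.prod_congr rfl
    intro k hk
    rw [mul_div_mul_left _ _ hlam.ne']
  rw [hL, hL, hsum, h1, h2, mul_div_mul_comm, hprod]
  congr 1
  rw [← Real.exp_sub]
  congr 1
  ring
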